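/- Define the large Schröder numbers $s_n$ by $s_0=1$ and $s_n=s_{n-1}+\sum_{k=0}^{n-1}s_{n-1-k}s_k$. Then for every positive integer $n$, $\det(s_{i+j})_{0\le i,j\le n-1}=2^{\binom{n}{2}}$. -/

import Mathlib

open Finset Matrix

private def uu : ℕ → ℕ → ℤ
  | 0, 0 => 1
  | 0, _+1 => 0
  | n+1, 0 => 2 * uu n 0 + 2 * uu n 1
  | n+1, k+1 => uu n k + 3 * uu n (k+1) + 2 * uu n (k+2)

private def vv : ℕ → ℕ → ℤ
  | 0, 0 => 1
  | 0, _+1 => 0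
  | n+1, 0 => 3 * vv n 0 + 2 * vv n 1
  | n+1, k+1 => vv n k + 3 * vv n (k+1) + 2 * vv n (k+2)

private lemma uu_vanish : ∀ n k, n < k → uu n k = 0 := by
  intro n
  induction n with
  | zero => intro k hk; match k, hk with | k+1, _ => rfl
  | succ n ih =>
    intro k hk
    match k, hk with
    | k+1, hk =>
      have h1 : n < k := by omega
      rw [uu, ih k h1, ih (k+1) (by omega), ih (k+2) (by omega)]
      ring

private lemma uu_diag : ∀ n, uu n n = 1 := by
  intro n
  induction n with
  | zero => rfl
  | succ n ih =>
    rw [uu, ih, uu_vanish n (n+1) (by omega), uu_vanish n (n+2) (by omega)]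
    ring

private lemma lemM : ∀ n k, uu (n+1) (k+1) = ∑ j ∈ range (n+1), uu j 0 * vv (n - j) k := by
  intro n
  induction n with
  | zero =>
    intro k
    rw [Finset.sum_range_one]
    match k with
    | 0 => rfl
    | k+1 => simp [uu, vv]
  | succ n ih =>
    intro k
    rw [Finset.sum_range_succ]
    have hsub : ∀ j ∈ range (n+1), uu j 0 * vv (n + 1 - j) k
        = uu j 0 * vv ((n - j) + 1) k := by
      intro j hj
      rw [mem_range] at hj
      congr 2
      omega
    rw [Finset.sum_congr rfl hsub]
    simp only [Nat.sub_self]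
    match k with
    | 0 =>
      have : ∀ j ∈ range (n+1), uu j 0 * vv ((n - j) + 1) 0
          = 3 * (uu j 0 * vv (n - j) 0) + 2 * (uu j 0 * vv (n - j) 1) := by
        intro j _; rw [vv]; ring
      rw [Finset.sum_congr rfl this, Finset.sum_add_distrib, ← Finset.mul_sum, ← Finset.mul_sum,
        ← ih 0, ← ih 1]
      have e1 : uu (n+2) 1 = uu (n+1) 0 + 3 * uu (n+1) 1 + 2 * uu (n+1) 2 := rfl
      have e2 : vv 0 0 = (1:ℤ) := rfl
      rw [e1, e2]; ring
    | k+1 =>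
      have : ∀ j ∈ range (n+1), uu j 0 * vv ((n - j) + 1) (k+1)
          = uu j 0 * vv (n - j) k + (3 * (uu j 0 * vv (n - j) (k+1))
            + 2 * (uu j 0 * vv (n - j) (k+2))) := by
        intro j _; rw [vv]; ring
      rw [Finset.sum_congr rfl this, Finset.sum_add_distrib, Finset.sum_add_distrib,
        ← Finset.mul_sum, ← Finset.mul_sum, ← ih k, ← ih (k+1), ← ih (k+2)]
      have e1 : uu (n+2) (k+2) = uu (n+1) (k+1) + 3 * uu (n+1) (k+2) + 2 * uu (n+1) (k+3) := rfl
      have e2 : vv 0 (k+1) = (0:ℤ) := rfl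
      rw [e1, e2]; ring

private lemma lemC : ∀ n, (uu (n+1) 0 = 2 * vv n 0)
    ∧ ∀ k, uu (n+1) (k+1) = 2 * vv n (k+1) + vv n k := by
  intro n
  induction n with
  | zero =>
    constructor
    · rfl
    · intro k
      match k with
      | 0 => rfl
      | k+1 => simp [uu, vv]
  | succ n ih =>
    obtain ⟨h0, hk⟩ := ih
    constructor
    · show 2 * uu (n+1) 0 + 2 * uu (n+1) 1 = 2 * (3 * vv n 0 + 2 * vv n 1)
      rw [h0, hk 0]; ring
    · intro k
      match k with
      | 0 =>
        show uu (n+1) 0 + 3 * uu (n+1) 1 + 2 * uu (n+1) 2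
            = 2 * (vv n 0 + 3 * vv n 1 + 2 * vv n 2) + (3 * vv n 0 + 2 * vv n 1)
        rw [h0, hk 0, hk 1]; ring
      | k+1 =>
        show uu (n+1) (k+1) + 3 * uu (n+1) (k+2) + 2 * uu (n+1) (k+3)
            = 2 * (vv n (k+1) + 3 * vv n (k+2) + 2 * vv n (k+3))
              + (vv n k + 3 * vv n (k+1) + 2 * vv n (k+2))
        rw [hk k, hk (k+1), hk (k+2)]; ring

private lemma schro : ∀ n : ℕ, uu (n+1) 0 = uu n 0 + ∑ k ∈ range (n+1), uu (n - k) 0 * uu k 0 := by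
  intro n
  match n with
  | 0 => rw [Finset.sum_range_one]; rfl
  | m+1 =>
    rw [Finset.sum_range_succ']
    have h1 : ∀ k ∈ range (m+1), uu (m + 1 - (k+1)) 0 * uu (k+1) 0
        = (fun j => uu j 0 * (2 * vv (m - j) 0)) (m + 1 - 1 - k) := by
      intro k hk; rw [mem_range] at hk
      simp only
      have e1 : m + 1 - (k+1) = m - k := by omega
      have e2 : m + 1 - 1 - k = m - k := by omega
      have e3 : m - (m - k) = k := by omega
      rw [e1, e2, e3, (lemC k).1]
    rw [Finset.sum_congr rfl h1,
      Finset.sum_range_reflect (fun j => uu j 0 * (2 * vv (m - j) 0)) (m+1)]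
    have h2 : ∑ j ∈ range (m+1), uu j 0 * (2 * vv (m - j) 0) = 2 * uu (m+1) 1 := by
      rw [lemM m 0, Finset.mul_sum]
      exact Finset.sum_congr rfl (fun j _ => by ring)
    rw [h2]
    have e4 : m + 1 - 0 = m + 1 := rfl
    have e5 : uu 0 0 = (1:ℤ) := rfl
    have e6 : uu (m+2) 0 = 2 * uu (m+1) 0 + 2 * uu (m+1) 1 := rfl
    rw [e4, e5, e6]
    ring

private lemma shift_sum (f : ℕ → ℤ) (M : ℕ) (hf : f M = 0) :
    ∑ k ∈ range M, f (k+1) = ∑ k ∈ range M, f k - f 0 := by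
  have h1 := Finset.sum_range_succ' f M
  have h2 := Finset.sum_range_succ f M
  rw [hf] at h2
  linarith

private lemma swap_sum (i j M : ℕ) (hi : i < M) (hj : j < M) :
    ∑ k ∈ range (M+1), 2^k * uu (i+1) k * uu j k
      = ∑ k ∈ range (M+1), 2^k * uu i k * uu (j+1) k := by
  have sg : ∑ k ∈ range M, (2:ℤ)^(k+1+1) * uu i (k+1+1) * uu j (k+1)
      = ∑ k ∈ range M, 2^(k+1) * uu i (k+1) * uu j k - 2^(0+1) * uu i (0+1) * uu j 0 :=
    shift_sum (fun k => (2:ℤ)^(k+1) * uu i (k+1) * uu j k) M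
      (by show (2:ℤ)^(M+1) * uu i (M+1) * uu j M = 0
          rw [uu_vanish j M hj]; ring)
  have sh : ∑ k ∈ range M, (2:ℤ)^(k+1+1) * uu i (k+1) * uu j (k+1+1)
      = ∑ k ∈ range M, 2^(k+1) * uu i k * uu j (k+1) - 2^(0+1) * uu i 0 * uu j (0+1) :=
    shift_sum (fun k => (2:ℤ)^(k+1) * uu i k * uu j (k+1)) M
      (by show (2:ℤ)^(M+1) * uu i M * uu j (M+1) = 0
          rw [uu_vanish i M hi]; ring)
  rw [Finset.sum_range_succ' (fun k => (2:ℤ)^k * uu (i+1) k * uu j k) (M),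
    Finset.sum_range_succ' (fun k => (2:ℤ)^k * uu i k * uu (j+1) k) (M)]
  have l1 : ∀ k ∈ range M, (2:ℤ)^(k+1) * uu (i+1) (k+1) * uu j (k+1)
      = 2^(k+1) * uu i k * uu j (k+1) + 3 * (2^(k+1) * uu i (k+1) * uu j (k+1))
        + 2^(k+1+1) * uu i (k+1+1) * uu j (k+1) := by
    intro k _
    rw [show uu (i+1) (k+1) = uu i k + 3 * uu i (k+1) + 2 * uu i (k+2) from rfl]
    ring
  have l2 : ∀ k ∈ range M, (2:ℤ)^(k+1) * uu i (k+1) * uu (j+1) (k+1)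
      = 2^(k+1) * uu i (k+1) * uu j k + 3 * (2^(k+1) * uu i (k+1) * uu j (k+1))
        + 2^(k+1+1) * uu i (k+1) * uu j (k+1+1) := by
    intro k _
    rw [show uu (j+1) (k+1) = uu j k + 3 * uu j (k+1) + 2 * uu j (k+2) from rfl]
    ring
  rw [Finset.sum_congr rfl l1, Finset.sum_congr rfl l2, Finset.sum_add_distrib,
    Finset.sum_add_distrib, Finset.sum_add_distrib, Finset.sum_add_distrib, sg, sh,
    show uu (i+1) 0 = 2 * uu i 0 + 2 * uu i 1 from rfl,
    show uu (j+1) 0 = 2 * uu j 0 + 2 * uu j 1 from rfl]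
  ring

private lemma keysum : ∀ i j M, i + j < M →
    ∑ k ∈ range (M+1), 2^k * uu i k * uu j k = uu (i+j) 0 := by
  intro i
  induction i with
  | zero =>
    intro j M _
    rw [Finset.sum_eq_single_of_mem 0 (by simp)
      (fun b _ hb => by
        match b, hb with
        | b+1, _ => rw [uu_vanish 0 (b+1) (by omega)]; ring)]
    show 2^0 * uu 0 0 * uu j 0 = uu (0+j) 0
    rw [show uu 0 0 = (1:ℤ) from rfl, Nat.zero_add]
    ring
  | succ i ih =>
    intro j M h
    rw [swap_sum i j M (by omega) (by omega), ih (j+1) M (by omega),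
      show i + (j+1) = i + 1 + j by omega]

theorem stmt_13 (s : ℕ → ℤ) (h0 : s 0 = 1)
    (hrec : ∀ n : ℕ, 1 ≤ n →
      s n = s (n - 1) + ∑ k ∈ Finset.range n, s (n - 1 - k) * s k)
    (n : ℕ) (hn : 1 ≤ n) :
    Matrix.det (Matrix.of fun i j : Fin n => s (i + j)) = 2 ^ n.choose 2 := by
  have s_eq : ∀ m, s m = uu m 0 := by
    intro m
    induction m using Nat.strong_induction_on with
    | _ m ih =>
      match m with
      | 0 => exact h0
      | m+1 =>
        rw [hrec (m+1) (by omega)]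
        simp only [Nat.add_sub_cancel]
        rw [schro m]
        congr 1
        · exact ih m (by omega)
        · apply Finset.sum_congr rfl
          intro k hk
          rw [mem_range] at hk
          rw [ih (m - k) (by omega), ih k (by omega)]
  set L : Matrix (Fin n) (Fin n) ℤ := Matrix.of (fun i k : Fin n => uu i k) with hL
  set D : Matrix (Fin n) (Fin n) ℤ := Matrix.diagonal (fun k : Fin n => (2:ℤ)^(k:ℕ)) with hD
  have hfact : (Matrix.of fun i j : Fin n => s (i + j)) = L * D * Lᵀ := by
    ext i j
    have hentry : (L * D * Lᵀ) i j = ∑ k : Fin n, (uu i k * 2^(k:ℕ)) * uu j k := by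
      rw [Matrix.mul_apply]
      apply Finset.sum_congr rfl
      intro k _
      rw [Matrix.mul_diagonal]
      rfl
    rw [hentry, Matrix.of_apply, s_eq]
    rw [Fin.sum_univ_eq_sum_range (fun k => (uu i k * 2^k) * uu j k) n]
    have hM : (i:ℕ) + (j:ℕ) < (i:ℕ) + (j:ℕ) + n := by omega
    have hext : ∑ k ∈ range (((i:ℕ) + (j:ℕ) + n) + 1), (2:ℤ)^k * uu i k * uu j k
        = ∑ k ∈ range n, (2:ℤ)^k * uu i k * uu j k := by
      symm
      apply Finset.sum_subset (Finset.range_subset_range.mpr (by omega))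
      intro k _ hk
      rw [mem_range, not_lt] at hk
      rw [uu_vanish i k (by omega)]
      ring
    rw [← keysum i j ((i:ℕ) + (j:ℕ) + n) hM, hext]
    exact Finset.sum_congr rfl (fun k _ => by ring)
  rw [hfact, Matrix.det_mul, Matrix.det_mul]
  have hdetL : L.det = 1 := by
    rw [Matrix.det_of_lowerTriangular L
      (fun i j hij => by
        rw [hL, Matrix.of_apply, uu_vanish i j (by exact hij)])]
    · apply Finset.prod_eq_one
      intro i _
      exact uu_diag i
  have hdetLt : Lᵀ.det = 1 := by rw [Matrix.det_transpose]; exact hdetL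
  have hdetD : D.det = 2 ^ n.choose 2 := by
    rw [hD, Matrix.det_diagonal, Finset.prod_pow_eq_pow_sum]
    congr 1
    rw [Fin.sum_univ_eq_sum_range (fun i => i) n]
    have h1 := Finset.sum_range_id_mul_two n
    have h2 := Nat.choose_two_right n
    omega
  rw [hdetL, hdetLt, hdetD]
  ring
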